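/- arXiv:1507.06542 — 10 statements merged into one kernel-verified Lean document; each statement's English description precedes it below -/
import Mathlib

section
/- Let E be a finite-dimensional real inner product space, ω an alternating bilinear form on E, and A : E → E the unique linear map with ω(v,w) = ⟨A v, w⟩ for all v, w. For every real number λ > 0, the eigenspace of −A² corresponding to λ has even dimension. -/
/-!
`A` commutes with `-A²`, so it preserves the `λ`-eigenspace `V` of `-A²`, and on `V` it
squares to `-λ`. Taking determinants, `(det A|_V)² = (-λ) ^ dim V`, which is negative when
`dim V` is odd.
-/

open RealInnerProductSpace Module

theorem Module.finrank_even_of_comp_self_eq_neg_smul {K M : Type*} [Field K] [LinearOrder K]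
    [IsStrictOrderedRing K] [AddCommGroup M] [Module K M] {c : K} (hc : 0 < c)
    (f : M →ₗ[K] M) (hf : f ∘ₗ f = (-c) • LinearMap.id) : Even (finrank K M) := by
  have hdet : LinearMap.det f ^ 2 = (-c) ^ finrank K M := by
    rw [sq, ← LinearMap.det_comp, hf, LinearMap.det_smul, LinearMap.det_id, mul_one]
  by_contra hodd
  have hneg : (-c) ^ finrank K M < 0 :=
    (Nat.not_even_iff_odd.mp hodd).pow_neg (neg_neg_of_pos hc)
  nlinarith [sq_nonneg (LinearMap.det f)]

namespace Module.End

variable {R M : Type*} [CommRing R] [AddCommGroup M] [Module R M]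

theorem mapsTo_eigenspace_neg_comp_self (A : End R M) (μ : R) :
    Set.MapsTo A (eigenspace (-(A ∘ₗ A)) μ) (eigenspace (-(A ∘ₗ A)) μ) :=
  mapsTo_genEigenspace_of_comm (f := -(A ∘ₗ A))
    ((Commute.refl A).mul_left (Commute.refl A)).neg_left μ 1

theorem restrict_comp_restrict_eigenspace_neg_comp_self (A : End R M) (μ : R) :
    A.restrict (mapsTo_eigenspace_neg_comp_self A μ) ∘ₗ
      A.restrict (mapsTo_eigenspace_neg_comp_self A μ) = (-μ) • LinearMap.id := by
  ext ⟨v, hv⟩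
  exact (neg_eq_iff_eq_neg.mp (mem_eigenspace_iff.mp hv)).trans (neg_smul μ v).symm

end Module.End

theorem stmt2_general {E : Type*} [NormedAddCommGroup E] [InnerProductSpace ℝ E]
    (A : E →ₗ[ℝ] E)
    (lam : ℝ) (hlam : 0 < lam) :
    Even (Module.finrank ℝ
      (Module.End.eigenspace (-(A ∘ₗ A) : Module.End ℝ E) lam)) :=
  Module.finrank_even_of_comp_self_eq_neg_smul hlam _
    (Module.End.restrict_comp_restrict_eigenspace_neg_comp_self A lam)

/-- For `A` associated to an alternating bilinear form `ω` via `ω v w = ⟪A v, w⟫`,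
the eigenspace of `−A²` corresponding to any `λ > 0` has even dimension. -/
theorem stmt2 {E : Type*} [NormedAddCommGroup E] [InnerProductSpace ℝ E]
    [FiniteDimensional ℝ E]
    (ω : E →ₗ[ℝ] E →ₗ[ℝ] ℝ) (hω : ∀ v : E, ω v v = 0)
    (A : E →ₗ[ℝ] E) (hA : ∀ v w : E, ω v w = ⟪A v, w⟫)
    (lam : ℝ) (hlam : 0 < lam) :
    Even (Module.finrank ℝ
      (Module.End.eigenspace (-(A ∘ₗ A) : Module.End ℝ E) lam)) :=
  stmt2_general A lam hlam
end

section
/- Let E be a finite-dimensional real inner product space, ω an alternating bilinear form on E with comass at most 1, and A : E → E the unique linear map with ω(v,w) = ⟨A v, w⟩ for all v, w. Then ⟨−A² v, v⟩ ≤ ⟨v, v⟩ for every v ∈ E, equivalently ‖A v‖ ≤ ‖v‖ for every v ∈ E; in particular every eigenvalue of −A² lies in the interval [0,1]. -/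
open RealInnerProductSpace

/-!
Since `⟪A v, v⟫ = ω v v = 0`, the map `A` is skew-adjoint, so `⟪-A² v, v⟫ = ‖A v‖²`.
Testing the comass bound on the orthogonal pair `v, A v` gives
`‖A v‖⁴ = ω(v, A v)² ≤ ‖v‖² ‖A v‖²`, i.e. `‖A v‖ ≤ ‖v‖`. Hence `0 ≤ ⟪-A² v, v⟫ ≤ ‖v‖²`,
which confines the eigenvalues of `-A²` to `[0, 1]`.
-/

section

variable {E : Type*} [NormedAddCommGroup E] [InnerProductSpace ℝ E]

theorem inner_apply_eq_neg_inner_apply_of_inner_self {A : E →ₗ[ℝ] E}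
    (hA : ∀ v, ⟪A v, v⟫ = 0) (v w : E) : ⟪A v, w⟫ = -⟪v, A w⟫ := by
  have h := hA (v + w)
  simp only [map_add, inner_add_left, inner_add_right, hA] at h
  rw [real_inner_comm] at h
  linarith

theorem inner_neg_comp_self_apply_self {A : E →ₗ[ℝ] E} (hA : ∀ v, ⟪A v, v⟫ = 0) (v : E) :
    ⟪(-(A ∘ₗ A)) v, v⟫ = ‖A v‖ ^ 2 := by
  rw [LinearMap.neg_apply, LinearMap.comp_apply, inner_neg_left,
    inner_apply_eq_neg_inner_apply_of_inner_self hA, neg_neg, real_inner_self_eq_norm_sq]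

theorem norm_apply_le_of_inner_sq_le {A : E →ₗ[ℝ] E} (hA : ∀ v, ⟪A v, v⟫ = 0)
    (hcomass : ∀ v w : E, ⟪A v, w⟫ ^ 2 ≤ ‖v‖ ^ 2 * ‖w‖ ^ 2 - ⟪v, w⟫ ^ 2) (v : E) :
    ‖A v‖ ≤ ‖v‖ := by
  have h := hcomass v (A v)
  rw [real_inner_self_eq_norm_sq, real_inner_comm, hA] at h
  refine le_of_not_gt fun hlt => ?_
  have hpos : 0 < ‖A v‖ ^ 2 := pow_pos ((norm_nonneg v).trans_lt hlt) 2
  have : ‖v‖ ^ 2 < ‖A v‖ ^ 2 := pow_lt_pow_left₀ hlt (norm_nonneg v) two_ne_zero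
  nlinarith

theorem Module.End.HasEigenvalue.mem_Icc_of_inner_bounds {T : Module.End ℝ E} {μ : ℝ}
    (hμ : T.HasEigenvalue μ) (h0 : ∀ v, 0 ≤ ⟪T v, v⟫) (h1 : ∀ v, ⟪T v, v⟫ ≤ ⟪v, v⟫) :
    μ ∈ Set.Icc (0 : ℝ) 1 := by
  obtain ⟨v, hv, hv0⟩ := hμ.exists_hasEigenvector
  have hTv : ⟪T v, v⟫ = μ * ⟪v, v⟫ := by
    rw [Module.End.mem_eigenspace_iff.mp hv, real_inner_smul_left]
  have hvv : 0 < ⟪v, v⟫ := real_inner_self_pos.mpr hv0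
  specialize h0 v
  specialize h1 v
  rw [hTv] at h0 h1
  exact ⟨nonneg_of_mul_nonneg_left h0 hvv, by nlinarith⟩

end

theorem stmt3_general {E : Type*} [NormedAddCommGroup E] [InnerProductSpace ℝ E]
    (ω : E →ₗ[ℝ] E →ₗ[ℝ] ℝ) (hω : ∀ v : E, ω v v = 0)
    (hcomass : ∀ v w : E, (ω v w) ^ 2 ≤ ‖v‖ ^ 2 * ‖w‖ ^ 2 - ⟪v, w⟫ ^ 2)
    (A : E →ₗ[ℝ] E) (hA : ∀ v w : E, ω v w = ⟪A v, w⟫) :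
    (∀ v : E, ⟪(-(A ∘ₗ A)) v, v⟫ ≤ ⟪v, v⟫) ∧
    (∀ v : E, ‖A v‖ ≤ ‖v‖) ∧
    (∀ mu : ℝ, Module.End.HasEigenvalue (-(A ∘ₗ A) : Module.End ℝ E) mu →
      mu ∈ Set.Icc (0 : ℝ) 1) := by
  have hskew : ∀ v, ⟪A v, v⟫ = 0 := fun v => by rw [← hA, hω]
  have hnorm : ∀ v, ‖A v‖ ≤ ‖v‖ :=
    norm_apply_le_of_inner_sq_le hskew fun v w => hA v w ▸ hcomass v w
  have hupper : ∀ v, ⟪(-(A ∘ₗ A)) v, v⟫ ≤ ⟪v, v⟫ := fun v => by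
    rw [inner_neg_comp_self_apply_self hskew, real_inner_self_eq_norm_sq]
    exact pow_le_pow_left₀ (norm_nonneg _) (hnorm v) 2
  refine ⟨hupper, hnorm, fun mu hmu => hmu.mem_Icc_of_inner_bounds (fun v => ?_) hupper⟩
  rw [inner_neg_comp_self_apply_self hskew]
  positivity

/-- If `ω` is an alternating bilinear form of comass at most 1 and `A` is its
associated map (`ω v w = ⟪A v, w⟫`), then `⟪−A² v, v⟫ ≤ ⟪v, v⟫`, equivalently
`‖A v‖ ≤ ‖v‖`, for all `v`; in particular every eigenvalue of `−A²` lies in `[0,1]`. -/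
theorem stmt3 {E : Type*} [NormedAddCommGroup E] [InnerProductSpace ℝ E]
    [FiniteDimensional ℝ E]
    (ω : E →ₗ[ℝ] E →ₗ[ℝ] ℝ) (hω : ∀ v : E, ω v v = 0)
    (hcomass : ∀ v w : E, (ω v w) ^ 2 ≤ ‖v‖ ^ 2 * ‖w‖ ^ 2 - ⟪v, w⟫ ^ 2)
    (A : E →ₗ[ℝ] E) (hA : ∀ v w : E, ω v w = ⟪A v, w⟫) :
    (∀ v : E, ⟪(-(A ∘ₗ A)) v, v⟫ ≤ ⟪v, v⟫) ∧
    (∀ v : E, ‖A v‖ ≤ ‖v‖) ∧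
    (∀ mu : ℝ, Module.End.HasEigenvalue (-(A ∘ₗ A) : Module.End ℝ E) mu →
      mu ∈ Set.Icc (0 : ℝ) 1) :=
  stmt3_general ω hω hcomass A hA
end

section
/- Let E be a finite-dimensional real inner product space and ω an alternating bilinear form on E with comass at most 1 (first cousin principle in degree 2). If v, w ∈ E are orthonormal with ω(v,w) = 1, and t ∈ E is orthogonal to both v and w, then ω(v,t) = 0 and ω(w,t) = 0. -/
/-!
Perturb the calibrated plane inside its comass bound: for every real `s`, the pair
`v, w + s t` is orthogonal with `‖w + s t‖² = 1 + s² ‖t‖²`, so comass gives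
`(1 + s ω(v,t))² ≤ 1 + s² ‖t‖²`. A quadratic inequality in `s` with no constant term
forces the linear coefficient `ω(v,t)` to vanish. Taking `v = w` in the comass bound shows
that `ω` is alternating, so `w, -v` is calibrated too, which gives the second claim.
-/

open RealInnerProductSpace

theorem eq_zero_of_forall_two_mul_le_sq_mul {a C : ℝ} (h : ∀ s : ℝ, 2 * s * a ≤ s ^ 2 * C) :
    a = 0 := by
  have hdiscrim : discrim C (-2 * a) 0 ≤ 0 :=
    discrim_le_zero fun s ↦ by nlinarith [h s]
  rw [discrim] at hdiscrim
  nlinarith [sq_nonneg a]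

section Comass

variable {E : Type*} [NormedAddCommGroup E] [InnerProductSpace ℝ E]
  {ω : E →ₗ[ℝ] E →ₗ[ℝ] ℝ}
  (hcomass : ∀ v w : E, (ω v w) ^ 2 ≤ ‖v‖ ^ 2 * ‖w‖ ^ 2 - ⟪v, w⟫ ^ 2)
include hcomass

theorem isAlt_of_comass_le_one : ω.IsAlt := fun v ↦ by
  have h := hcomass v v
  rw [real_inner_self_eq_norm_sq] at h
  nlinarith [sq_nonneg (ω v v)]

theorem apply_eq_zero_of_calibrated {u u' t : E} (hu : ‖u‖ = 1) (hu' : ‖u'‖ = 1)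
    (huu' : ⟪u, u'⟫ = 0) (hcal : ω u u' = 1) (hut : ⟪u, t⟫ = 0) (hu't : ⟪u', t⟫ = 0) :
    ω u t = 0 := by
  refine eq_zero_of_forall_two_mul_le_sq_mul (C := ‖t‖ ^ 2 - ω u t ^ 2) fun s ↦ ?_
  have hinner : ⟪u, u' + s • t⟫ = 0 := by
    rw [inner_add_right, real_inner_smul_right, huu', hut, mul_zero, add_zero]
  have hnorm : ‖u' + s • t‖ ^ 2 = 1 + s ^ 2 * ‖t‖ ^ 2 := by
    rw [norm_add_sq_real, real_inner_smul_right, hu't, hu', norm_smul, mul_pow, Real.norm_eq_abs,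
      sq_abs]
    ring
  have hω : ω u (u' + s • t) = 1 + s * ω u t := by
    rw [map_add, map_smul, hcal, smul_eq_mul]
  have h := hcomass u (u' + s • t)
  rw [hinner, hnorm, hω, hu] at h
  nlinarith

end Comass

theorem stmt4_general {E : Type*} [NormedAddCommGroup E] [InnerProductSpace ℝ E]
    (ω : E →ₗ[ℝ] E →ₗ[ℝ] ℝ)
    (hcomass : ∀ v w : E, (ω v w) ^ 2 ≤ ‖v‖ ^ 2 * ‖w‖ ^ 2 - ⟪v, w⟫ ^ 2)
    (v w t : E) (hv : ‖v‖ = 1) (hw : ‖w‖ = 1) (hvw : ⟪v, w⟫ = 0)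
    (hcal : ω v w = 1) (hvt : ⟪v, t⟫ = 0) (hwt : ⟪w, t⟫ = 0) :
    ω v t = 0 ∧ ω w t = 0 := by
  have hcal' : ω w (-v) = 1 := by
    rw [map_neg, (isAlt_of_comass_le_one hcomass).neg, hcal]
  refine ⟨apply_eq_zero_of_calibrated hcomass hv hw hvw hcal hvt hwt,
    apply_eq_zero_of_calibrated hcomass hw (norm_neg v ▸ hv) ?_ hcal' hwt ?_⟩
  · rw [inner_neg_right, real_inner_comm, hvw, neg_zero]
  · rw [inner_neg_left, hvt, neg_zero]

/-- First cousin principle in degree 2: if `ω` is an alternating bilinear form of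
comass at most 1, `v, w` are orthonormal with `ω v w = 1`, and `t` is orthogonal to
both `v` and `w`, then `ω v t = 0` and `ω w t = 0`. -/
theorem stmt4 {E : Type*} [NormedAddCommGroup E] [InnerProductSpace ℝ E]
    [FiniteDimensional ℝ E]
    (ω : E →ₗ[ℝ] E →ₗ[ℝ] ℝ) (hω : ∀ v : E, ω v v = 0)
    (hcomass : ∀ v w : E, (ω v w) ^ 2 ≤ ‖v‖ ^ 2 * ‖w‖ ^ 2 - ⟪v, w⟫ ^ 2)
    (v w t : E) (hv : ‖v‖ = 1) (hw : ‖w‖ = 1) (hvw : ⟪v, w⟫ = 0)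
    (hcal : ω v w = 1) (hvt : ⟪v, t⟫ = 0) (hwt : ⟪w, t⟫ = 0) :
    ω v t = 0 ∧ ω w t = 0 :=
  stmt4_general ω hcomass v w t hv hw hvw hcal hvt hwt
end

section
/- Let E be a finite-dimensional real inner product space, ω an alternating bilinear form on E with comass at most 1, and A : E → E the unique linear map with ω(v,w) = ⟨A v, w⟩ for all v, w. If v, w ∈ E are orthonormal with ω(v,w) = 1, then A v = w and A w = −v; in particular the plane span{v,w} is invariant under A, and −A² u = u for every u ∈ span{v,w}. -/
/-!
Comass at most one forces `‖A x‖ ≤ ‖x‖`: test the comass inequality on the pair `(x, A x)`,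
which is orthogonal because `⟪x, A x⟫ = ω x x = 0`. A calibrated pair then has
`⟪A v, w⟫ = 1` with `‖A v‖ ≤ 1 = ‖w‖`, which is the equality case of Cauchy–Schwarz, so
`A v = w`; by antisymmetry `(w, -v)` is calibrated too, so `A w = -v`.
-/

open RealInnerProductSpace

theorem eq_of_norm_le_one_of_inner_eq_one {F : Type*} [NormedAddCommGroup F]
    [InnerProductSpace ℝ F] {a b : F} (ha : ‖a‖ ≤ 1) (hb : ‖b‖ = 1) (hab : ⟪a, b⟫ = 1) :
    a = b := by
  have hsq : ‖a - b‖ ^ 2 ≤ 0 := by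
    rw [norm_sub_sq_real, hab, hb]
    nlinarith [norm_nonneg a]
  rw [← sub_eq_zero, ← norm_eq_zero]
  exact pow_eq_zero_iff two_ne_zero |>.mp (le_antisymm hsq (sq_nonneg _))

theorem norm_apply_le_of_comass_le_one {E : Type*} [NormedAddCommGroup E]
    [InnerProductSpace ℝ E] {ω : E →ₗ[ℝ] E →ₗ[ℝ] ℝ} (hω : ω.IsAlt)
    (hcomass : ∀ v w : E, (ω v w) ^ 2 ≤ ‖v‖ ^ 2 * ‖w‖ ^ 2 - ⟪v, w⟫ ^ 2)
    {A : E →ₗ[ℝ] E} (hA : ∀ v w : E, ω v w = ⟪A v, w⟫) (x : E) :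
    ‖A x‖ ≤ ‖x‖ := by
  have horth : ⟪x, A x⟫ = 0 := by rw [real_inner_comm, ← hA, hω.self_eq_zero]
  have h := hcomass x (A x)
  rw [hA, real_inner_self_eq_norm_sq, horth] at h
  have hsq : ‖A x‖ ^ 2 ≤ ‖x‖ ^ 2 := by
    rcases (sq_nonneg ‖A x‖).eq_or_lt with h0 | hpos
    · rw [← h0]; positivity
    · nlinarith
  exact pow_le_pow_iff_left₀ (norm_nonneg _) (norm_nonneg _) two_ne_zero |>.mp hsq

theorem apply_eq_of_calibrated {E : Type*} [NormedAddCommGroup E]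
    [InnerProductSpace ℝ E] {ω : E →ₗ[ℝ] E →ₗ[ℝ] ℝ} (hω : ω.IsAlt)
    (hcomass : ∀ v w : E, (ω v w) ^ 2 ≤ ‖v‖ ^ 2 * ‖w‖ ^ 2 - ⟪v, w⟫ ^ 2)
    {A : E →ₗ[ℝ] E} (hA : ∀ v w : E, ω v w = ⟪A v, w⟫) {x y : E}
    (hx : ‖x‖ ≤ 1) (hy : ‖y‖ = 1) (hcal : ω x y = 1) : A x = y :=
  eq_of_norm_le_one_of_inner_eq_one
    ((norm_apply_le_of_comass_le_one hω hcomass hA x).trans hx) hy (hA x y ▸ hcal)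

theorem stmt5_general {E : Type*} [NormedAddCommGroup E] [InnerProductSpace ℝ E]
    (ω : E →ₗ[ℝ] E →ₗ[ℝ] ℝ) (hω : ∀ v : E, ω v v = 0)
    (hcomass : ∀ v w : E, (ω v w) ^ 2 ≤ ‖v‖ ^ 2 * ‖w‖ ^ 2 - ⟪v, w⟫ ^ 2)
    (A : E →ₗ[ℝ] E) (hA : ∀ v w : E, ω v w = ⟪A v, w⟫)
    (v w : E) (hv : ‖v‖ = 1) (hw : ‖w‖ = 1)
    (hcal : ω v w = 1) :
    A v = w ∧ A w = -v ∧
    (∀ u ∈ Submodule.span ℝ ({v, w} : Set E), A u ∈ Submodule.span ℝ ({v, w} : Set E)) ∧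
    (∀ u ∈ Submodule.span ℝ ({v, w} : Set E), (-(A ∘ₗ A)) u = u) := by
  have hAv : A v = w := apply_eq_of_calibrated hω hcomass hA hv.le hw hcal
  have hAw : A w = -v := apply_eq_of_calibrated hω hcomass hA hw.le (by rw [norm_neg, hv])
    (by rw [map_neg, ← LinearMap.IsAlt.neg hω, neg_neg, hcal])
  have hv_mem : v ∈ Submodule.span ℝ {v, w} := Submodule.subset_span (Set.mem_insert v {w})
  have hw_mem : w ∈ Submodule.span ℝ {v, w} :=
    Submodule.subset_span (Set.mem_insert_of_mem v rfl)
  have hinv : Submodule.span ℝ {v, w} ≤ (Submodule.span ℝ {v, w}).comap A := by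
    rw [Submodule.span_le]
    rintro x (rfl | rfl)
    · rwa [SetLike.mem_coe, Submodule.mem_comap, hAv]
    · rw [SetLike.mem_coe, Submodule.mem_comap, hAw]
      exact Submodule.neg_mem _ hv_mem
  have hsq : Set.EqOn (-(A ∘ₗ A)) (LinearMap.id : E →ₗ[ℝ] E) {v, w} := by
    rintro x (rfl | rfl) <;> simp [hAv, hAw]
  exact ⟨hAv, hAw, fun u hu => hinv hu, fun u hu => LinearMap.eqOn_span' hsq hu⟩

/-- If `v, w` are orthonormal with `ω v w = 1` for an alternating bilinear form `ω`
of comass at most 1 with associated map `A` (`ω v w = ⟪A v, w⟫`), then `A v = w`,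
`A w = −v`; in particular `span {v, w}` is `A`-invariant and `−A² u = u` on it. -/
theorem stmt5 {E : Type*} [NormedAddCommGroup E] [InnerProductSpace ℝ E]
    [FiniteDimensional ℝ E]
    (ω : E →ₗ[ℝ] E →ₗ[ℝ] ℝ) (hω : ∀ v : E, ω v v = 0)
    (hcomass : ∀ v w : E, (ω v w) ^ 2 ≤ ‖v‖ ^ 2 * ‖w‖ ^ 2 - ⟪v, w⟫ ^ 2)
    (A : E →ₗ[ℝ] E) (hA : ∀ v w : E, ω v w = ⟪A v, w⟫)
    (v w : E) (hv : ‖v‖ = 1) (hw : ‖w‖ = 1) (hvw : ⟪v, w⟫ = 0)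
    (hcal : ω v w = 1) :
    A v = w ∧ A w = -v ∧
    (∀ u ∈ Submodule.span ℝ ({v, w} : Set E), A u ∈ Submodule.span ℝ ({v, w} : Set E)) ∧
    (∀ u ∈ Submodule.span ℝ ({v, w} : Set E), (-(A ∘ₗ A)) u = u) :=
  stmt5_general ω hω hcomass A hA v w hv hw hcal
end

section
/- Let E be a finite-dimensional real inner product space and A : E → E an injective skew-adjoint linear map. Let Q be the unique positive self-adjoint square root of −A², and set J := Q⁻¹ ∘ A. Then J² = −Id, and J is an isometry with respect to the inner product: ⟨J v, J w⟩ = ⟨v, w⟩ for all v, w ∈ E. -/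
/-!
Any `J` with `Q J = A` satisfies `J Q J = -Q`: multiplying by `Q` on the left gives
`(Q J)(Q J) = A² = -Q²`. Hence `R := -A J = Jᵀ Q J` is positive, and
`R² = A J (Q J) J = A (J Q J) J = -A² = Q²`, so `R = Q` by uniqueness of positive square roots;
this reads `Q J² = -Q`, i.e. `J² = -1`. Then `J` commutes with `Q`, which makes `J` skew-adjoint,
and a skew-adjoint `J` with `J² = -1` preserves the inner product.

Uniqueness of positive square roots: if `R² = Q²` then `‖R v‖ = ‖Q v‖`, and for an eigenvector
`v` of `R - Q` with eigenvalue `m` expanding both sides gives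
`m² ‖v‖² = 2 m ⟪R v, v⟫ = -2 m ⟪Q v, v⟫`, whose signs force `m = 0`.
-/

open RealInnerProductSpace

theorem mul_mul_eq_neg_of_mul_eq {R : Type*} [Ring R] {a q j : R} (hq : IsUnit q)
    (hsq : q * q = -(a * a)) (hj : q * j = a) : j * q * j = -q :=
  hq.mul_left_cancel <| by rw [mul_neg, hsq, neg_neg, ← hj]; noncomm_ring

namespace LinearMap

section RCLike

open InnerProductSpace

variable {𝕜 E : Type*} [RCLike 𝕜] [NormedAddCommGroup E] [InnerProductSpace 𝕜 E]

theorem IsSymmetric.norm_apply_eq_of_mul_self_eq {R Q : E →ₗ[𝕜] E} (hR : R.IsSymmetric)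
    (hQ : Q.IsSymmetric) (h : R * R = Q * Q) (v : E) : ‖R v‖ = ‖Q v‖ := by
  have norm_sq : ∀ T : E →ₗ[𝕜] E, T.IsSymmetric → ((‖T v‖ ^ 2 : ℝ) : 𝕜) = ⟪(T * T) v, v⟫_𝕜 :=
    fun T hT => by rw [Module.End.mul_apply, hT, inner_self_eq_norm_sq_to_K]; push_cast; rfl
  have h2 : ((‖R v‖ ^ 2 : ℝ) : 𝕜) = ((‖Q v‖ ^ 2 : ℝ) : 𝕜) := by
    rw [norm_sq R hR, norm_sq Q hQ, h]
  exact (pow_left_inj₀ (norm_nonneg _) (norm_nonneg _) two_ne_zero).1 (RCLike.ofReal_injective h2)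

theorem IsPositive.eq_zero_of_apply_eq_add_smul {R Q : E →ₗ[𝕜] E} (hR : R.IsPositive)
    (hQ : Q.IsPositive) (h : R * R = Q * Q) {v : E} (hv : v ≠ 0) {m : ℝ}
    (hm : R v = Q v + (m : 𝕜) • v) : m = 0 := by
  have hnorm := hR.isSymmetric.norm_apply_eq_of_mul_self_eq hQ.isSymmetric h v
  have norm_smul_sq : ‖(m : 𝕜) • v‖ ^ 2 = m ^ 2 * ‖v‖ ^ 2 := by
    rw [norm_smul, RCLike.norm_ofReal, mul_pow, sq_abs]
  have hQv : 2 * m * RCLike.re ⟪Q v, v⟫_𝕜 = -(m ^ 2 * ‖v‖ ^ 2) := by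
    have := norm_add_sq (𝕜 := 𝕜) (Q v) ((m : 𝕜) • v)
    rw [← hm, hnorm, inner_smul_right, RCLike.re_ofReal_mul, norm_smul_sq] at this
    linarith
  have hRv : 2 * m * RCLike.re ⟪R v, v⟫_𝕜 = m ^ 2 * ‖v‖ ^ 2 := by
    have := norm_sub_sq (𝕜 := 𝕜) (R v) ((m : 𝕜) • v)
    rw [← eq_sub_of_add_eq hm.symm, hnorm, inner_smul_right, RCLike.re_ofReal_mul,
      norm_smul_sq] at this
    linarith
  have hsq : (m ^ 2 * ‖v‖ ^ 2) ^ 2 =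
      -(4 * m ^ 2 * (RCLike.re ⟪R v, v⟫_𝕜 * RCLike.re ⟪Q v, v⟫_𝕜)) := by
    linear_combination (2 * m * RCLike.re ⟪Q v, v⟫_𝕜) * hRv + (m ^ 2 * ‖v‖ ^ 2) * hQv
  have hzero : m ^ 2 * ‖v‖ ^ 2 = 0 :=
    pow_eq_zero_iff two_ne_zero |>.1 <| le_antisymm
      (hsq ▸ neg_nonpos.2 (mul_nonneg (by positivity)
        (mul_nonneg (hR.re_inner_nonneg_left v) (hQ.re_inner_nonneg_left v))))
      (sq_nonneg _)
  simpa [norm_ne_zero_iff.2 hv] using hzero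

theorem IsPositive.eq_of_mul_self_eq [FiniteDimensional 𝕜 E] {R Q : E →ₗ[𝕜] E}
    (hR : R.IsPositive) (hQ : Q.IsPositive) (h : R * R = Q * Q) : R = Q := by
  have hD := hR.isSymmetric.sub hQ.isSymmetric
  rw [← sub_eq_zero]
  refine (hD.eigenvectorBasis rfl).toBasis.ext fun i => ?_
  have hbi := hD.apply_eigenvectorBasis rfl i
  have hm : hD.eigenvalues rfl i = 0 :=
    hR.eq_zero_of_apply_eq_add_smul hQ h ((hD.eigenvectorBasis rfl).toBasis.ne_zero i)
      (by rw [sub_apply] at hbi; rw [OrthonormalBasis.coe_toBasis, ← hbi]; abel)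
  rw [OrthonormalBasis.coe_toBasis, hbi, hm, RCLike.ofReal_zero, zero_smul, zero_apply]

theorem inner_map_map_of_skew_of_mul_self_eq_neg_one {J : E →ₗ[𝕜] E}
    (hJ : ∀ v w, ⟪J v, w⟫_𝕜 = -⟪v, J w⟫_𝕜) (hJJ : J * J = -1) (v w : E) :
    ⟪J v, J w⟫_𝕜 = ⟪v, w⟫_𝕜 := by
  rw [hJ, ← Module.End.mul_apply, hJJ, neg_apply, Module.End.one_apply, inner_neg_right, neg_neg]

end RCLike

section Real

variable {E : Type*} [NormedAddCommGroup E] [InnerProductSpace ℝ E] {A Q J : E →ₗ[ℝ] E}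

theorem isPositive_neg_mul_of_mul_eq (hA : ∀ v w, ⟪A v, w⟫ = -⟪v, A w⟫)
    (hQ : Q.IsPositive) (hJ : Q * J = A) : (-(A * J)).IsPositive := by
  have hconj : ∀ v w, ⟪(-(A * J)) v, w⟫ = ⟪J v, Q (J w)⟫ := fun v w => by
    rw [← Module.End.mul_apply Q, hJ, ← neg_neg ⟪J v, A w⟫, ← hA, neg_apply,
      Module.End.mul_apply, inner_neg_left]
  refine (isPositive_iff _).2 ⟨fun v w => ?_, fun v => ?_⟩
  · rw [← real_inner_comm v, hconj, hconj, ← hQ.isSymmetric]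
    exact real_inner_comm _ _
  · rw [hconj]; exact hQ.inner_nonneg_right _

theorem mul_self_eq_neg_one_of_mul_eq [FiniteDimensional ℝ E]
    (hA : ∀ v w, ⟪A v, w⟫ = -⟪v, A w⟫) (hQ : Q.IsPositive) (hQu : IsUnit Q)
    (hQsq : Q * Q = -(A * A)) (hJ : Q * J = A) : J * J = -1 := by
  have hJQJ : J * Q * J = -Q := mul_mul_eq_neg_of_mul_eq hQu hQsq hJ
  have hsq : -(A * J) * -(A * J) = Q * Q := by
    calc -(A * J) * -(A * J) = A * (J * Q * J) * J := by rw [neg_mul_neg, ← hJ]; noncomm_ring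
      _ = -(A * A) := by rw [hJQJ, mul_neg, neg_mul, mul_assoc, hJ]
      _ = Q * Q := hQsq.symm
  have hAJ : -(A * J) = Q := (isPositive_neg_mul_of_mul_eq hA hQ hJ).eq_of_mul_self_eq hQ hsq
  exact hQu.mul_left_cancel <| by rw [← mul_assoc, hJ, mul_neg_one, ← hAJ, neg_neg]

theorem inner_map_eq_neg_inner_map_of_mul_eq_of_mul_eq (hA : ∀ v w, ⟪A v, w⟫ = -⟪v, A w⟫)
    (hQ : Q.IsSymmetric) (hQs : Function.Surjective Q) (hQJ : Q * J = A) (hJQ : J * Q = A)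
    (v w : E) : ⟪J v, w⟫ = -⟪v, J w⟫ := by
  obtain ⟨u, rfl⟩ := hQs w
  rw [← hQ, ← Module.End.mul_apply, hQJ, hA, ← hJQ, Module.End.mul_apply]

end Real

end LinearMap

/-- If `A` is injective and skew-adjoint, `Q` is the positive self-adjoint square
root of `−A²`, and `J := Q⁻¹ ∘ A` (characterized by `Q ∘ J = A`), then `J² = −Id`
and `J` preserves the inner product. -/
theorem stmt8 {E : Type*} [NormedAddCommGroup E] [InnerProductSpace ℝ E]
    [FiniteDimensional ℝ E]
    (A : E →ₗ[ℝ] E) (hskew : ∀ v w : E, ⟪A v, w⟫ = -⟪v, A w⟫)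
    (hinj : Function.Injective A)
    (Q : E →ₗ[ℝ] E) (hQsa : ∀ v w : E, ⟪Q v, w⟫ = ⟪v, Q w⟫)
    (hQpos : ∀ v : E, 0 ≤ ⟪Q v, v⟫)
    (hQsq : Q ∘ₗ Q = -(A ∘ₗ A)) :
    (∃ J : E →ₗ[ℝ] E, Q ∘ₗ J = A) ∧
    ∀ J : E →ₗ[ℝ] E, Q ∘ₗ J = A →
      J ∘ₗ J = -LinearMap.id ∧ ∀ v w : E, ⟪J v, J w⟫ = ⟪v, w⟫ := by
  have hAu : IsUnit A :=
    (Module.End.isUnit_iff A).2 ⟨hinj, LinearMap.injective_iff_surjective.1 hinj⟩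
  have hQu : IsUnit Q :=
    isUnit_of_mul_isUnit_left (M := Module.End ℝ E) (hQsq ▸ (hAu.mul hAu).neg)
  have hQ : Q.IsPositive := (LinearMap.isPositive_iff Q).2 ⟨hQsa, hQpos⟩
  refine ⟨⟨↑hQu.unit⁻¹ * A, ?_⟩, fun J (hJ : Q * J = A) => ?_⟩
  · rw [← Module.End.mul_eq_comp, ← mul_assoc, hQu.mul_val_inv, one_mul]
  have hJJ : J * J = -1 := LinearMap.mul_self_eq_neg_one_of_mul_eq hskew hQ hQu hQsq hJ
  have hJQ : J * Q = A := by
    calc J * Q = -(J * Q * J * J) := by rw [mul_assoc _ J J, hJJ, mul_neg_one, neg_neg]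
      _ = A := by rw [mul_mul_eq_neg_of_mul_eq hQu hQsq hJ, neg_mul, neg_neg, hJ]
  have hJskew : ∀ v w, ⟪J v, w⟫ = -⟪v, J w⟫ :=
    LinearMap.inner_map_eq_neg_inner_map_of_mul_eq_of_mul_eq hskew hQsa
      ((Module.End.isUnit_iff Q).1 hQu).2 hJ hJQ
  exact ⟨hJJ, LinearMap.inner_map_map_of_skew_of_mul_self_eq_neg_one hJskew hJJ⟩
end

section
/- Let E be a finite-dimensional real inner product space, ω an alternating bilinear form on E whose associated map A (defined by ω(v,w) = ⟨A v, w⟩) is injective, Q the positive self-adjoint square root of −A², and J := Q⁻¹ ∘ A. Define g_J(v,w) := ω(v, J w). Then g_J(v,w) = ⟨Q v, w⟩ for all v, w; g_J is a symmetric positive-definite bilinear form (an inner product) on E; J is compatible with g_J and ω, i.e. g_J(J v, J w) = g_J(v, w) and ω(J v, J w) = ω(v, w) for all v, w ∈ E; and ω(v,w) = g_J(J v, w) for all v, w ∈ E. -/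
/-! Since `Q J = A`, the operator `-A J = -A Q⁻¹ A` satisfies `⟪-A J v, w⟫ = ⟪Q J v, J w⟫`,
so it is positive, and it squares to `A Q⁻¹ A² Q⁻¹ A = -A²`. By uniqueness of positive square
roots `A J = -Q`. Then `ω (v, J w) = -⟪v, A J w⟫ = ⟪Q v, w⟫`, `Q J² = A J = -Q` gives `J² = -1`,
and positivity of `Q` together with its injectivity makes `⟪Q v, v⟫` definite. -/

open RealInnerProductSpace

namespace LinearMap

variable {E : Type*} [NormedAddCommGroup E] [InnerProductSpace ℝ E]

theorem IsPositive.apply_eq_zero_of_inner_self_eq_zero {P : E →ₗ[ℝ] E} (hP : P.IsPositive)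
    {v : E} (hv : ⟪P v, v⟫ = 0) : P v = 0 := by
  set a := ⟪P v, P v⟫
  set c := ⟪P (P v), P v⟫
  -- positivity at `(c + 1) v - a P v` reads `0 ≤ -a² (c + 2)`
  have hkey := hP.inner_nonneg_left ((c + 1) • v - a • P v)
  have hPPv : ⟪P (P v), v⟫ = a := hP.isSymmetric (P v) v
  simp only [map_sub, map_smul, inner_sub_left, inner_sub_right, real_inner_smul_left,
    real_inner_smul_right, hv, hPPv] at hkey
  have hc : 0 ≤ c := hP.inner_nonneg_left (P v)
  have ha : a = 0 := by nlinarith [real_inner_self_nonneg (x := P v)]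
  exact inner_self_eq_zero.mp ha

theorem IsPositive.eq_of_comp_self_eq_comp_self [FiniteDimensional ℝ E] {P S : E →ₗ[ℝ] E}
    (hP : P.IsPositive) (hS : S.IsPositive) (h : P ∘ₗ P = S ∘ₗ S) : P = S := by
  let b := hS.isSymmetric.eigenvectorBasis rfl
  refine b.toBasis.ext fun i ↦ ?_
  set μ := hS.isSymmetric.eigenvalues rfl i
  have hSb : S (b i) = μ • b i := hS.isSymmetric.apply_eigenvectorBasis rfl i
  have hμ : 0 ≤ μ := hS.nonneg_eigenvalues rfl i
  clear_value μ
  have hPPb : P (P (b i)) = (μ * μ) • b i := by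
    simpa [hSb, smul_smul] using LinearMap.congr_fun h (b i)
  simp only [OrthonormalBasis.coe_toBasis, hSb]
  rcases hμ.eq_or_lt with hμ | hμ
  · subst hμ
    rw [mul_zero, zero_smul] at hPPb
    rw [zero_smul]
    have hPb : ⟪P (b i), P (b i)⟫ = 0 := by rw [← hP.isSymmetric, hPPb, inner_zero_left]
    exact inner_self_eq_zero.mp hPb
  · set u := P (b i) - μ • b i
    have hu : P u + μ • u = 0 := by
      simp only [u, map_sub, map_smul, hPPb, smul_sub, smul_smul]
      abel
    have hinner : ⟪P u, u⟫ + μ * ⟪u, u⟫ = 0 := by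
      simpa [inner_add_left, real_inner_smul_left] using congrArg (⟪·, u⟫) hu
    have hu0 : ⟪u, u⟫ = 0 := by
      nlinarith [hP.inner_nonneg_left u, real_inner_self_nonneg (x := u)]
    exact sub_eq_zero.mp (inner_self_eq_zero.mp hu0)

end LinearMap

section SkewAdjoint

variable {E : Type*} [NormedAddCommGroup E] [InnerProductSpace ℝ E] {A Q J : E →ₗ[ℝ] E}

theorem inner_map_eq_neg_inner_of_isAlt {ω : E →ₗ[ℝ] E →ₗ[ℝ] ℝ} (hω : ω.IsAlt)
    (hA : ∀ v w, ω v w = ⟪A v, w⟫) (v w : E) : ⟪A v, w⟫ = -⟪v, A w⟫ := by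
  rw [← hA, ← hω.neg w v, hA, real_inner_comm]

theorem injective_of_comp_self_eq_neg_comp_self (hA : Function.Injective A)
    (hQA : Q ∘ₗ Q = -(A ∘ₗ A)) : Function.Injective Q := by
  refine (injective_iff_map_eq_zero Q).mpr fun v hv ↦ hA (hA ?_)
  simpa [hv] using (LinearMap.congr_fun hQA v).symm

theorem isPositive_neg_comp_of_comp_eq (hskew : ∀ v w, ⟪A v, w⟫ = -⟪v, A w⟫)
    (hQ : Q.IsPositive) (hJ : Q ∘ₗ J = A) : (-(A ∘ₗ J)).IsPositive := by
  have hQJ : ∀ v, Q (J v) = A v := LinearMap.congr_fun hJ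
  have hinner : ∀ v w, ⟪(-(A ∘ₗ J)) v, w⟫ = ⟪Q (J v), J w⟫ := fun v w ↦ by
    rw [LinearMap.neg_apply, LinearMap.comp_apply, inner_neg_left, hskew, neg_neg, ← hQJ,
      hQ.isSymmetric]
  refine (LinearMap.isPositive_iff _).mpr ⟨fun v w ↦ ?_, fun v ↦ ?_⟩
  · calc ⟪(-(A ∘ₗ J)) v, w⟫ = ⟪Q (J v), J w⟫ := hinner v w
      _ = ⟪Q (J w), J v⟫ := by rw [hQ.isSymmetric, real_inner_comm]
      _ = ⟪v, (-(A ∘ₗ J)) w⟫ := by rw [← hinner, real_inner_comm]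
  · rw [hinner]
    exact hQ.inner_nonneg_left (J v)

theorem comp_comp_eq_neg_of_comp_eq (hQ : Function.Injective Q) (hQA : Q ∘ₗ Q = -(A ∘ₗ A))
    (hJ : Q ∘ₗ J = A) : J ∘ₗ A ∘ₗ J = -A := by
  have hQJ : ∀ v, Q (J v) = A v := LinearMap.congr_fun hJ
  ext v
  apply hQ
  have hQAv : Q (A v) = -A (A (J v)) := by simpa [hQJ] using LinearMap.congr_fun hQA (J v)
  simp [hQJ, hQAv]

theorem comp_eq_neg_of_isPositive_of_comp_eq [FiniteDimensional ℝ E]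
    (hskew : ∀ v w, ⟪A v, w⟫ = -⟪v, A w⟫) (hQ : Q.IsPositive) (hQinj : Function.Injective Q)
    (hQA : Q ∘ₗ Q = -(A ∘ₗ A)) (hJ : Q ∘ₗ J = A) : A ∘ₗ J = -Q := by
  have hsq : (-(A ∘ₗ J)) ∘ₗ (-(A ∘ₗ J)) = Q ∘ₗ Q := by
    simp only [LinearMap.neg_comp, LinearMap.comp_neg, neg_neg, hQA, LinearMap.comp_assoc,
      comp_comp_eq_neg_of_comp_eq hQinj hQA hJ]
  rw [← (isPositive_neg_comp_of_comp_eq hskew hQ hJ).eq_of_comp_self_eq_comp_self hQ hsq, neg_neg]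

end SkewAdjoint

/-- With `ω` alternating, `A` its associated (injective) map, `Q` the positive
self-adjoint square root of `−A²` and `J := Q⁻¹ ∘ A`, the form
`g_J (v, w) := ω (v, J w)` equals `⟪Q v, w⟫`, is a symmetric positive-definite
bilinear form, `J` is compatible with `g_J` and `ω`, and `ω (v, w) = g_J (J v, w)`. -/
theorem stmt9 {E : Type*} [NormedAddCommGroup E] [InnerProductSpace ℝ E]
    [FiniteDimensional ℝ E]
    (ω : E →ₗ[ℝ] E →ₗ[ℝ] ℝ) (hω : ∀ v : E, ω v v = 0)
    (A : E →ₗ[ℝ] E) (hA : ∀ v w : E, ω v w = ⟪A v, w⟫)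
    (hinj : Function.Injective A)
    (Q : E →ₗ[ℝ] E) (hQsa : ∀ v w : E, ⟪Q v, w⟫ = ⟪v, Q w⟫)
    (hQpos : ∀ v : E, 0 ≤ ⟪Q v, v⟫)
    (hQsq : Q ∘ₗ Q = -(A ∘ₗ A))
    (J : E →ₗ[ℝ] E) (hJ : Q ∘ₗ J = A)
    (gJ : E → E → ℝ) (hgJ : ∀ v w : E, gJ v w = ω v (J w)) :
    (∀ v w : E, gJ v w = ⟪Q v, w⟫) ∧
    (∀ v w : E, gJ v w = gJ w v) ∧
    (∀ v : E, v ≠ 0 → 0 < gJ v v) ∧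
    (∀ v w : E, gJ (J v) (J w) = gJ v w) ∧
    (∀ v w : E, ω (J v) (J w) = ω v w) ∧
    (∀ v w : E, ω v w = gJ (J v) w) := by
  have hQ : Q.IsPositive := Q.isPositive_iff.mpr ⟨hQsa, hQpos⟩
  have hskew := inner_map_eq_neg_inner_of_isAlt hω hA
  have hQinj := injective_of_comp_self_eq_neg_comp_self hinj hQsq
  have hAJ : ∀ v, A (J v) = -Q v :=
    LinearMap.congr_fun (comp_eq_neg_of_isPositive_of_comp_eq hskew hQ hQinj hQsq hJ)
  have hQJ : ∀ v, Q (J v) = A v := LinearMap.congr_fun hJ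
  have hJJ : ∀ v, J (J v) = -v := fun v ↦ hQinj (by rw [hQJ, hAJ, map_neg])
  have hgQ : ∀ v w, gJ v w = ⟪Q v, w⟫ := fun v w ↦ by
    rw [hgJ, hA, hskew, hAJ, inner_neg_right, neg_neg, hQsa]
  refine ⟨hgQ, fun v w ↦ ?_, fun v hv ↦ ?_, fun v w ↦ ?_, fun v w ↦ ?_, fun v w ↦ ?_⟩
  · rw [hgQ, hgQ, hQsa, real_inner_comm]
  · rw [hgQ]
    refine (hQpos v).lt_of_ne' fun h ↦ hv (hQinj ?_)
    rw [hQ.apply_eq_zero_of_inner_self_eq_zero h, map_zero]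
  · rw [hgQ, hQJ, ← hA, hgJ]
  · rw [hA, hAJ, inner_neg_left, ← hgQ, hgJ, hJJ, map_neg, neg_neg]
  · rw [hgQ, hQJ, hA]
end

section
/- Let E be a finite-dimensional real inner product space, ω an alternating bilinear form on E with comass at most 1 whose associated map A (defined by ω(v,w) = ⟨A v, w⟩) is injective, Q the positive self-adjoint square root of −A², J := Q⁻¹ ∘ A, and g_J(v,w) := ω(v, J w). Then g_J(v,v) ≤ ⟨v, v⟩ for every v ∈ E, i.e. the new inner product g_J is dominated by the original one. -/
/-!
Writing `ω v w = ⟪A v, w⟫`, we get `g_J (v, v) = ⟪A v, J v⟫ = -⟪A (J v), v⟫ ≤ ‖A (J v)‖ ‖v‖`.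
Since `Q` is self-adjoint, `A` is skew and `Q² = -A²`, the maps `A` and `Q` have the same
length on every vector, so `‖A (J v)‖ = ‖Q (J v)‖ = ‖A v‖`; and comass at most 1 gives
`‖A v‖ ≤ ‖v‖`.
-/

open RealInnerProductSpace

section

variable {E : Type*} [NormedAddCommGroup E] [InnerProductSpace ℝ E]

theorem LinearMap.inner_map_eq_neg_inner_map_swap {A : E →ₗ[ℝ] E}
    (hA : ∀ v, ⟪A v, v⟫ = 0) (v w : E) : ⟪A v, w⟫ = -⟪A w, v⟫ := by
  have h := hA (v + w)
  rw [map_add, inner_add_left, inner_add_right, inner_add_right, hA v, hA w] at h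
  linarith

theorem LinearMap.norm_map_eq_of_comp_self_eq_neg {A Q : E →ₗ[ℝ] E}
    (hA : ∀ v w, ⟪A v, w⟫ = -⟪A w, v⟫) (hQ : Q.IsSymmetric) (hQA : Q ∘ₗ Q = -(A ∘ₗ A))
    (x : E) : ‖A x‖ = ‖Q x‖ := by
  have hQQ : Q (Q x) = -A (A x) := LinearMap.congr_fun hQA x
  have h : ⟪A x, A x⟫ = ⟪Q x, Q x⟫ := by
    rw [← hQ, hQQ, inner_neg_left, hA, real_inner_comm]
  rw [real_inner_self_eq_norm_sq, real_inner_self_eq_norm_sq] at h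
  exact (pow_left_inj₀ (norm_nonneg _) (norm_nonneg _) two_ne_zero).mp h

theorem LinearMap.norm_map_le_of_inner_map_sq_le {A : E →ₗ[ℝ] E}
    (hA : ∀ v w, ⟪A v, w⟫ ^ 2 ≤ ‖v‖ ^ 2 * ‖w‖ ^ 2) (v : E) : ‖A v‖ ≤ ‖v‖ := by
  have h := hA v (A v)
  rw [real_inner_self_eq_norm_sq] at h
  rcases (norm_nonneg (A v)).eq_or_lt with h0 | hpos
  · rw [← h0]
    exact norm_nonneg v
  · have hsq : ‖A v‖ ^ 2 ≤ ‖v‖ ^ 2 :=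
      le_of_mul_le_mul_right (by linarith) (pow_pos hpos 2)
    exact (pow_le_pow_iff_left₀ hpos.le (norm_nonneg v) two_ne_zero).mp hsq

end

theorem stmt10_general {E : Type*} [NormedAddCommGroup E] [InnerProductSpace ℝ E]
    (ω : E →ₗ[ℝ] E →ₗ[ℝ] ℝ) (hω : ∀ v : E, ω v v = 0)
    (hcomass : ∀ v w : E, (ω v w) ^ 2 ≤ ‖v‖ ^ 2 * ‖w‖ ^ 2 - ⟪v, w⟫ ^ 2)
    (A : E →ₗ[ℝ] E) (hA : ∀ v w : E, ω v w = ⟪A v, w⟫)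
    (Q : E →ₗ[ℝ] E) (hQsa : ∀ v w : E, ⟪Q v, w⟫ = ⟪v, Q w⟫)
    (hQsq : Q ∘ₗ Q = -(A ∘ₗ A))
    (J : E →ₗ[ℝ] E) (hJ : Q ∘ₗ J = A)
    (gJ : E → E → ℝ) (hgJ : ∀ v w : E, gJ v w = ω v (J w)) :
    ∀ v : E, gJ v v ≤ ⟪v, v⟫ := by
  have hskew : ∀ v w, ⟪A v, w⟫ = -⟪A w, v⟫ :=
    LinearMap.inner_map_eq_neg_inner_map_swap fun v => hA v v ▸ hω v
  have hAle : ∀ v, ‖A v‖ ≤ ‖v‖ := LinearMap.norm_map_le_of_inner_map_sq_le fun v w =>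
    hA v w ▸ (hcomass v w).trans (sub_le_self _ (sq_nonneg _))
  intro v
  calc gJ v v = -⟪A (J v), v⟫ := by rw [hgJ, hA, hskew]
    _ ≤ ‖A (J v)‖ * ‖v‖ := (neg_le_abs _).trans (abs_real_inner_le_norm _ _)
    _ = ‖A v‖ * ‖v‖ := by
      rw [LinearMap.norm_map_eq_of_comp_self_eq_neg hskew hQsa hQsq, ← LinearMap.comp_apply, hJ]
    _ ≤ ‖v‖ * ‖v‖ := mul_le_mul_of_nonneg_right (hAle v) (norm_nonneg v)
    _ = ⟪v, v⟫ := (real_inner_self_eq_norm_mul_norm v).symm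

/-- If moreover `ω` has comass at most 1, then the new inner product
`g_J (v, w) := ω (v, J w)` is dominated by the original one:
`g_J (v, v) ≤ ⟪v, v⟫` for all `v`. -/
theorem stmt10 {E : Type*} [NormedAddCommGroup E] [InnerProductSpace ℝ E]
    [FiniteDimensional ℝ E]
    (ω : E →ₗ[ℝ] E →ₗ[ℝ] ℝ) (hω : ∀ v : E, ω v v = 0)
    (hcomass : ∀ v w : E, (ω v w) ^ 2 ≤ ‖v‖ ^ 2 * ‖w‖ ^ 2 - ⟪v, w⟫ ^ 2)
    (A : E →ₗ[ℝ] E) (hA : ∀ v w : E, ω v w = ⟪A v, w⟫)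
    (hinj : Function.Injective A)
    (Q : E →ₗ[ℝ] E) (hQsa : ∀ v w : E, ⟪Q v, w⟫ = ⟪v, Q w⟫)
    (hQpos : ∀ v : E, 0 ≤ ⟪Q v, v⟫)
    (hQsq : Q ∘ₗ Q = -(A ∘ₗ A))
    (J : E →ₗ[ℝ] E) (hJ : Q ∘ₗ J = A)
    (gJ : E → E → ℝ) (hgJ : ∀ v w : E, gJ v w = ω v (J w)) :
    ∀ v : E, gJ v v ≤ ⟪v, v⟫ :=
  stmt10_general ω hω hcomass A hA Q hQsa hQsq J hJ gJ hgJ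
end

section
/- Let E be a finite-dimensional real inner product space and J : E → E a linear map with J² = −Id which is an isometry (⟨J v, J w⟩ = ⟨v, w⟩ for all v, w). Define ω(v,w) := ⟨J v, w⟩. Then ω is an alternating bilinear form of comass at most 1: ω(v,w)² ≤ ‖v‖²‖w‖² − ⟨v,w⟩² for all v, w ∈ E (Wirtinger inequality in degree 2). -/
/-!
`ω(v, ·) = ⟪J v, ·⟫` vanishes on `v` because an isometric complex structure is skew-adjoint.
Hence `v` and `J v` are orthogonal vectors of the same length, and Bessel's inequality for this
pair, `⟪v, w⟫² + ⟪J v, w⟫² ≤ ‖v‖² ‖w‖²`, is the claimed comass bound.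
-/

open RealInnerProductSpace

section

variable {E : Type*} [NormedAddCommGroup E] [InnerProductSpace ℝ E]

theorem inner_sq_add_inner_sq_le_of_inner_eq_zero {u u' : E} (horth : ⟪u, u'⟫ = 0)
    (hnorm : ‖u'‖ = ‖u‖) (w : E) :
    ⟪u, w⟫ ^ 2 + ⟪u', w⟫ ^ 2 ≤ ‖u‖ ^ 2 * ‖w‖ ^ 2 := by
  set s := ⟪u, w⟫ ^ 2 + ⟪u', w⟫ ^ 2
  -- Cauchy–Schwarz for `w` and its (rescaled) projection `x` onto `span {u, u'}`.
  set x := ⟪u, w⟫ • u + ⟪u', w⟫ • u'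
  have hxw : ⟪x, w⟫ = s := by
    simp only [x, s, inner_add_left, real_inner_smul_left]
    ring
  have hxx : ⟪x, x⟫ = s * ‖u‖ ^ 2 := by
    simp only [x, s, inner_add_left, inner_add_right, real_inner_smul_left,
      real_inner_smul_right, horth, real_inner_comm u u']
    rw [real_inner_self_eq_norm_sq, real_inner_self_eq_norm_sq, hnorm]
    ring
  have hcs : s * s ≤ s * (‖u‖ ^ 2 * ‖w‖ ^ 2) := by
    have := real_inner_mul_inner_self_le x w
    rw [hxw, hxx, real_inner_self_eq_norm_sq] at this
    linarith
  rcases (by positivity : 0 ≤ s).eq_or_lt with hs | hs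
  · rw [← hs]
    positivity
  · exact le_of_mul_le_mul_left hcs hs

theorem inner_apply_self_eq_zero_of_isometry {J : E →ₗ[ℝ] E} (hJJ : ∀ v, J (J v) = -v)
    (hJiso : ∀ v w : E, ⟪J v, J w⟫ = ⟪v, w⟫) (v : E) : ⟪J v, v⟫ = 0 := by
  have hskew : ⟪J v, v⟫ = -⟪v, J v⟫ := by
    rw [← hJiso, hJJ, inner_neg_left]
  rw [real_inner_comm (J v) v] at hskew
  linarith

end

theorem stmt11_general {E : Type*} [NormedAddCommGroup E] [InnerProductSpace ℝ E]
    (J : E →ₗ[ℝ] E) (hJ2 : J ∘ₗ J = -LinearMap.id)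
    (hJiso : ∀ v w : E, ⟪J v, J w⟫ = ⟪v, w⟫)
    (ω : E → E → ℝ) (hω : ∀ v w : E, ω v w = ⟪J v, w⟫) :
    (∀ v : E, ω v v = 0) ∧
    (∀ v w : E, (ω v w) ^ 2 ≤ ‖v‖ ^ 2 * ‖w‖ ^ 2 - ⟪v, w⟫ ^ 2) := by
  have hJJ (v : E) : J (J v) = -v := LinearMap.congr_fun hJ2 v
  have halt := inner_apply_self_eq_zero_of_isometry hJJ hJiso
  refine ⟨fun v => (hω v v).trans (halt v), fun v w => ?_⟩
  have hnorm : ‖J v‖ = ‖v‖ := by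
    rw [norm_eq_sqrt_real_inner, hJiso, ← norm_eq_sqrt_real_inner]
  have hbessel := inner_sq_add_inner_sq_le_of_inner_eq_zero
    (by rw [real_inner_comm]; exact halt v) hnorm w
  rw [hω]
  linarith

/-- Wirtinger inequality in degree 2: if `J` is an isometric complex structure on a
real inner product space `E`, then `ω (v, w) := ⟪J v, w⟫` is an alternating bilinear
form of comass at most 1. -/
theorem stmt11 {E : Type*} [NormedAddCommGroup E] [InnerProductSpace ℝ E]
    [FiniteDimensional ℝ E]
    (J : E →ₗ[ℝ] E) (hJ2 : J ∘ₗ J = -LinearMap.id)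
    (hJiso : ∀ v w : E, ⟪J v, J w⟫ = ⟪v, w⟫)
    (ω : E → E → ℝ) (hω : ∀ v w : E, ω v w = ⟪J v, w⟫) :
    (∀ v : E, ω v v = 0) ∧
    (∀ v w : E, (ω v w) ^ 2 ≤ ‖v‖ ^ 2 * ‖w‖ ^ 2 - ⟪v, w⟫ ^ 2) :=
  stmt11_general J hJ2 hJiso ω hω
end

section
/- Let E be a finite-dimensional real vector space equipped with two inner products g and g' such that g'(v,v) ≤ g(v,v) for all v ∈ E. Then for all v, w ∈ E the squared 2-dimensional areas compare: g'(v,v) g'(w,w) − g'(v,w)² ≤ g(v,v) g(w,w) − g(v,w)². Consequently, if an alternating bilinear form ω satisfies ω(v,w)² ≤ g'(v,v) g'(w,w) − g'(v,w)² for all v, w (comass at most 1 with respect to g'), then ω(v,w)² ≤ g(v,v) g(w,w) − g(v,w)² for all v, w (comass at most 1 with respect to g). -/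
/-! Write `g = g' + d`, where `d` is positive semidefinite because `g' ≤ g` on the diagonal.
Expanding the Gram determinant of `g' + d` gives that of `g'`, that of `d` (nonnegative by
Cauchy–Schwarz) and a mixed term `g'(v,v) d(w,w) + d(v,v) g'(w,w) - 2 g'(v,w) d(v,w)`, which is
nonnegative by Cauchy–Schwarz for `g'` and `d` followed by AM–GM. -/

namespace LinearMap.BilinForm

variable {R M : Type*} [CommRing R] [LinearOrder R] [IsStrictOrderedRing R]
  [AddCommGroup M] [Module R M] {B C : LinearMap.BilinForm R M}

/-- The squared area of the parallelogram spanned by `v` and `w`. -/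
def gramDet (B : LinearMap.BilinForm R M) (v w : M) : R := B v v * B w w - B v w ^ 2

lemma gramDet_nonneg (hB : LinearMap.IsSymm B) (hBnonneg : ∀ x, 0 ≤ B x x) (v w : M) :
    0 ≤ B.gramDet v w :=
  sub_nonneg.2 (B.apply_sq_le_of_symm hBnonneg hB v w)

lemma two_mul_apply_mul_apply_le (hB : LinearMap.IsSymm B) (hC : LinearMap.IsSymm C)
    (hBnonneg : ∀ x, 0 ≤ B x x) (hCnonneg : ∀ x, 0 ≤ C x x) (v w : M) :
    2 * (B v w * C v w) ≤ B v v * C w w + C v v * B w w := by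
  have hx : 0 ≤ B v v * C w w := mul_nonneg (hBnonneg v) (hCnonneg w)
  have hy : 0 ≤ C v v * B w w := mul_nonneg (hCnonneg v) (hBnonneg w)
  have hprod : (B v w * C v w) ^ 2 ≤ (B v v * C w w) * (C v v * B w w) :=
    calc (B v w * C v w) ^ 2 = B v w ^ 2 * C v w ^ 2 := mul_pow _ _ _
      _ ≤ (B v v * B w w) * (C v v * C w w) :=
        mul_le_mul (B.apply_sq_le_of_symm hBnonneg hB v w) (C.apply_sq_le_of_symm hCnonneg hC v w)
          (sq_nonneg _) (mul_nonneg (hBnonneg v) (hBnonneg w))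
      _ = (B v v * C w w) * (C v v * B w w) := by ring
  refine le_of_sq_le_sq ?_ (add_nonneg hx hy)
  calc (2 * (B v w * C v w)) ^ 2 = 4 * (B v w * C v w) ^ 2 := by ring
    _ ≤ 4 * (B v v * C w w) * (C v v * B w w) := by rw [mul_assoc]; gcongr
    _ ≤ (B v v * C w w + C v v * B w w) ^ 2 := four_mul_le_sq_add _ _

lemma gramDet_le_gramDet_add (hB : LinearMap.IsSymm B) (hC : LinearMap.IsSymm C)
    (hBnonneg : ∀ x, 0 ≤ B x x) (hCnonneg : ∀ x, 0 ≤ C x x) (v w : M) :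
    B.gramDet v w ≤ (B + C).gramDet v w := by
  have hmixed := two_mul_apply_mul_apply_le hB hC hBnonneg hCnonneg v w
  have hCgram := gramDet_nonneg hC hCnonneg v w
  simp only [gramDet, add_apply] at hCgram ⊢
  linarith

lemma gramDet_mono (hB : LinearMap.IsSymm B) (hC : LinearMap.IsSymm C)
    (hBnonneg : ∀ x, 0 ≤ B x x) (hle : ∀ x, B x x ≤ C x x) (v w : M) :
    B.gramDet v w ≤ C.gramDet v w := by
  have hsub : LinearMap.IsSymm (C - B) := ⟨fun x y => by simp [← hB.eq x y, ← hC.eq x y]⟩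
  have hsplit : B + (C - B) = C := add_sub_cancel B C
  have h := gramDet_le_gramDet_add hB hsub hBnonneg (fun x => sub_nonneg.2 (hle x)) v w
  rwa [hsplit] at h

end LinearMap.BilinForm

open LinearMap.BilinForm in
theorem stmt14_general {E : Type*} [AddCommGroup E] [Module ℝ E]
    (g g' : E →ₗ[ℝ] E →ₗ[ℝ] ℝ)
    (hgsymm : ∀ v w : E, g v w = g w v)
    (hg'symm : ∀ v w : E, g' v w = g' w v) (hg'pos : ∀ v : E, v ≠ 0 → 0 < g' v v)
    (hle : ∀ v : E, g' v v ≤ g v v) :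
    (∀ v w : E, g' v v * g' w w - (g' v w) ^ 2 ≤ g v v * g w w - (g v w) ^ 2) ∧
    (∀ ω : E →ₗ[ℝ] E →ₗ[ℝ] ℝ, (∀ v : E, ω v v = 0) →
      (∀ v w : E, (ω v w) ^ 2 ≤ g' v v * g' w w - (g' v w) ^ 2) →
      ∀ v w : E, (ω v w) ^ 2 ≤ g v v * g w w - (g v w) ^ 2) := by
  have hg'nonneg (v : E) : 0 ≤ g' v v := by
    rcases eq_or_ne v 0 with rfl | hv
    · simp
    · exact (hg'pos v hv).le
  have hgram (v w : E) : gramDet g' v w ≤ gramDet g v w :=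
    gramDet_mono ⟨hg'symm⟩ ⟨hgsymm⟩ hg'nonneg hle v w
  exact ⟨hgram, fun ω _ hω v w => (hω v w).trans (hgram v w)⟩

/-- Degree-2 comass comparison (Harvey–Lawson, Theorem 6.11, degree 2): if `g` and
`g'` are inner products on a finite-dimensional real vector space with
`g' (v, v) ≤ g (v, v)` for all `v`, then the Gram determinants compare, and hence
any alternating bilinear form of comass at most 1 with respect to `g'` has comass
at most 1 with respect to `g`. -/
theorem stmt14 {E : Type*} [AddCommGroup E] [Module ℝ E] [FiniteDimensional ℝ E]
    (g g' : E →ₗ[ℝ] E →ₗ[ℝ] ℝ)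
    (hgsymm : ∀ v w : E, g v w = g w v) (hgpos : ∀ v : E, v ≠ 0 → 0 < g v v)
    (hg'symm : ∀ v w : E, g' v w = g' w v) (hg'pos : ∀ v : E, v ≠ 0 → 0 < g' v v)
    (hle : ∀ v : E, g' v v ≤ g v v) :
    (∀ v w : E, g' v v * g' w w - (g' v w) ^ 2 ≤ g v v * g w w - (g v w) ^ 2) ∧
    (∀ ω : E →ₗ[ℝ] E →ₗ[ℝ] ℝ, (∀ v : E, ω v v = 0) →
      (∀ v w : E, (ω v w) ^ 2 ≤ g' v v * g' w w - (g' v w) ^ 2) →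
      ∀ v w : E, (ω v w) ^ 2 ≤ g v v * g w w - (g v w) ^ 2) :=
  stmt14_general g g' hgsymm hg'symm hg'pos hle
end

section
/- Let E be a finite-dimensional real inner product space and A : E → E an injective skew-adjoint linear map. Then the dimension of E is even, say 2m, and there exist vectors v₁, …, v_m ∈ E and positive reals λ₁, …, λ_m such that −A² v_i = λ_i v_i for each i and the collection {v₁, A v₁/√λ₁, v₂, A v₂/√λ₂, …, v_m, A v_m/√λ_m} is an orthonormal basis of E (canonical form of a skew-adjoint operator). -/
/-!
The operator `S = -A²` is symmetric, and `⟪S v, v⟫ = ‖A v‖²`, so by injectivity every eigenvalue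
of `S` is positive. Take a unit eigenvector `v₀` of `S` with eigenvalue `μ`. Since `A (A v₀) = -μ v₀`
and `⟪v₀, A v₀⟫ = 0`, the plane `span {v₀, A v₀}` is two-dimensional and `A`-invariant, hence so
is its orthogonal complement, on which `A` is again skew and injective. Induction on the dimension
gives orthonormal eigenvectors `vᵢ` of `S` orthogonal to every `A vⱼ`, and then
`⟪A vᵢ, A vⱼ⟫ = ⟪S vᵢ, vⱼ⟫ = λᵢ δᵢⱼ` shows that the rescaled `A vᵢ / √λᵢ` complete them to an
orthonormal family of the right size.
-/

open RealInnerProductSpace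

theorem Orthonormal.fin_cons {E : Type*} [NormedAddCommGroup E] [InnerProductSpace ℝ E] {m : ℕ}
    {v₀ : E} {v : Fin m → E} (hv : Orthonormal ℝ v) (hv₀ : ‖v₀‖ = 1) (h : ∀ i, ⟪v₀, v i⟫ = 0) :
    Orthonormal ℝ (Fin.cons v₀ v : Fin (m + 1) → E) := by
  refine ⟨Fin.cases hv₀ hv.1, fun i j hij ↦ ?_⟩
  induction i using Fin.cases <;> induction j using Fin.cases
  · exact absurd rfl hij
  · exact h _
  · simpa [real_inner_comm] using h _
  · exact hv.2 fun h ↦ hij (congrArg Fin.succ h)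

theorem finrank_span_pair_of_inner_eq_zero {𝕜 E : Type*} [RCLike 𝕜] [NormedAddCommGroup E]
    [InnerProductSpace 𝕜 E] {u w : E} (hu : u ≠ 0) (hw : w ≠ 0) (h : inner 𝕜 u w = 0) :
    Module.finrank 𝕜 (Submodule.span 𝕜 {u, w}) = 2 := by
  have hli : LinearIndependent 𝕜 ![u, w] := by
    refine linearIndependent_of_ne_zero_of_inner_eq_zero (by simp [Fin.forall_fin_two, hu, hw]) ?_
    intro i j hij
    fin_cases i <;> fin_cases j <;> simp_all [inner_eq_zero_symm]
  rw [← Matrix.range_cons_cons_empty]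
  simpa using finrank_span_eq_card hli

theorem LinearMap.apply_mem_span_pair {R M : Type*} [Semiring R] [AddCommMonoid M] [Module R M]
    {A : M →ₗ[R] M} {v : M} {c : R} (h : A (A v) = c • v) :
    ∀ x ∈ Submodule.span R {v, A v}, A x ∈ Submodule.span R {v, A v} := by
  suffices Submodule.span R {v, A v} ≤ (Submodule.span R {v, A v}).comap A from this
  rw [Submodule.span_le, Set.insert_subset_iff, Set.singleton_subset_iff]
  refine ⟨Submodule.subset_span (by simp), ?_⟩
  simpa [h] using Submodule.smul_mem _ c (Submodule.subset_span (by simp) : v ∈ _)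

theorem LinearMap.IsSymmetric.exists_unit_eigenvector {E : Type*} [NormedAddCommGroup E]
    [InnerProductSpace ℝ E] [FiniteDimensional ℝ E] [Nontrivial E] {T : E →ₗ[ℝ] E}
    (hT : T.IsSymmetric) : ∃ (v : E) (μ : ℝ), ‖v‖ = 1 ∧ T v = μ • v := by
  let i : Fin (Module.finrank ℝ E) := ⟨0, Module.finrank_pos⟩
  exact ⟨hT.eigenvectorBasis rfl i, hT.eigenvalues rfl i, (hT.eigenvectorBasis rfl).orthonormal.1 i,
    (hT.hasEigenvector_eigenvectorBasis rfl i).apply_eq_smul⟩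

namespace LinearMap

variable {E : Type*} [NormedAddCommGroup E] [InnerProductSpace ℝ E]

def IsSkewSymmetric (A : E →ₗ[ℝ] E) : Prop :=
  ∀ v w : E, ⟪A v, w⟫ = -⟪v, A w⟫

namespace IsSkewSymmetric

variable {A : E →ₗ[ℝ] E}

theorem inner_self_apply (hA : A.IsSkewSymmetric) (v : E) : ⟪v, A v⟫ = 0 := by
  have := hA v v
  rw [real_inner_comm] at this
  linarith

theorem inner_neg_comp_self_apply (hA : A.IsSkewSymmetric) (v w : E) :
    ⟪(-(A ∘ₗ A)) v, w⟫ = ⟪A v, A w⟫ := by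
  rw [neg_apply, comp_apply, inner_neg_left, hA, neg_neg]

theorem isSymmetric_neg_comp_self (hA : A.IsSkewSymmetric) : (-(A ∘ₗ A)).IsSymmetric := by
  intro v w
  rw [hA.inner_neg_comp_self_apply, real_inner_comm, ← hA.inner_neg_comp_self_apply,
    real_inner_comm]

theorem eigenvalue_pos (hA : A.IsSkewSymmetric) (hinj : Function.Injective A) {v : E} {μ : ℝ}
    (hv : v ≠ 0) (heig : (-(A ∘ₗ A)) v = μ • v) : 0 < μ := by
  have hAv : 0 < ⟪A v, A v⟫ := real_inner_self_pos.mpr ((map_ne_zero_iff A hinj).mpr hv)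
  rw [← hA.inner_neg_comp_self_apply, heig, real_inner_smul_left] at hAv
  exact pos_of_mul_pos_left hAv real_inner_self_nonneg

theorem apply_mem_orthogonal (hA : A.IsSkewSymmetric) {W : Submodule ℝ E}
    (hW : ∀ x ∈ W, A x ∈ W) : ∀ x ∈ Wᗮ, A x ∈ Wᗮ := by
  intro x hx y hy
  rw [← neg_eq_zero, ← hA, hx (A y) (hW y hy)]

theorem restrict (hA : A.IsSkewSymmetric) {W : Submodule ℝ E} (hW : ∀ x ∈ W, A x ∈ W) :
    (A.restrict hW).IsSkewSymmetric :=
  fun v w ↦ hA v w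

theorem orthonormal_sum_elim {ι : Type*} (hA : A.IsSkewSymmetric) {v : ι → E} {lam : ι → ℝ}
    (hlam : ∀ i, 0 < lam i) (heig : ∀ i, (-(A ∘ₗ A)) (v i) = lam i • v i)
    (hv : Orthonormal ℝ v) (hvA : ∀ i j, ⟪v i, A (v j)⟫ = 0) :
    Orthonormal ℝ (Sum.elim v fun i ↦ (√(lam i))⁻¹ • A (v i)) := by
  classical
  have hAA : ∀ i j, ⟪A (v i), A (v j)⟫ = lam i * if i = j then 1 else 0 := by
    intro i j
    rw [← hA.inner_neg_comp_self_apply, heig, real_inner_smul_left, orthonormal_iff_ite.mp hv]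
  rw [orthonormal_iff_ite]
  rintro (i | i) (j | j)
  · simpa using orthonormal_iff_ite.mp hv i j
  · simp [real_inner_smul_right, hvA]
  · rw [Sum.elim_inr, Sum.elim_inl, real_inner_comm]
    simp [real_inner_smul_right, hvA]
  · simp only [Sum.elim_inr, real_inner_smul_left, real_inner_smul_right, hAA, Sum.inr.injEq]
    split_ifs with hij
    · subst hij
      rw [mul_one, ← mul_assoc, ← mul_inv, Real.mul_self_sqrt (hlam i).le,
        inv_mul_cancel₀ (hlam i).ne']
    · simp

theorem exists_orthonormal_eigenvectors [FiniteDimensional ℝ E] (hA : A.IsSkewSymmetric)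
    (hinj : Function.Injective A) :
    ∃ m : ℕ, Module.finrank ℝ E = 2 * m ∧ ∃ (v : Fin m → E) (lam : Fin m → ℝ),
      (∀ i, 0 < lam i) ∧ (∀ i, (-(A ∘ₗ A)) (v i) = lam i • v i) ∧
      Orthonormal ℝ v ∧ ∀ i j, ⟪v i, A (v j)⟫ = 0 := by
  induction hn : Module.finrank ℝ E using Nat.strong_induction_on generalizing E with
  | _ n ih =>
  rcases subsingleton_or_nontrivial E with hE | hE
  · refine ⟨0, by simp [← hn, Module.finrank_zero_of_subsingleton], Fin.elim0, Fin.elim0, ?_⟩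
    simp [Orthonormal]
  obtain ⟨v₀, μ, hv₀, heig⟩ := hA.isSymmetric_neg_comp_self.exists_unit_eigenvector
  have hv₀0 : v₀ ≠ 0 := by rintro rfl; simp at hv₀
  have hAv₀0 : A v₀ ≠ 0 := (map_ne_zero_iff A hinj).mpr hv₀0
  set W := Submodule.span ℝ {v₀, A v₀}
  have hW : ∀ x ∈ W, A x ∈ W := apply_mem_span_pair (c := -μ) <| by
    rw [neg_smul, ← heig, neg_apply, neg_neg, comp_apply]
  have hv₀W : v₀ ∈ W := Submodule.subset_span (by simp)
  have hAv₀W : A v₀ ∈ W := Submodule.subset_span (by simp)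
  have hWrank : Module.finrank ℝ W = 2 :=
    finrank_span_pair_of_inner_eq_zero hv₀0 hAv₀0 (hA.inner_self_apply v₀)
  have hWperp := W.finrank_add_finrank_orthogonal
  have hWperpA := hA.apply_mem_orthogonal hW
  obtain ⟨m, hm, v, lam, hlam, hveig, hvon, hvA⟩ := ih _ (by omega)
    (hA.restrict hWperpA) (fun x y h ↦ Subtype.ext (hinj (congrArg Subtype.val h))) rfl
  refine ⟨m + 1, by omega, Fin.cons v₀ fun i ↦ (v i : E), Fin.cons μ lam,
    Fin.cases (hA.eigenvalue_pos hinj hv₀0 heig) hlam,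
    Fin.cases heig fun i ↦ by simpa using congrArg Subtype.val (hveig i),
    (hvon.comp_linearIsometry Wᗮ.subtypeₗᵢ).fin_cons hv₀ fun i ↦
      Submodule.inner_right_of_mem_orthogonal hv₀W (v i).2, fun i j ↦ ?_⟩
  induction i using Fin.cases <;> induction j using Fin.cases
  · exact hA.inner_self_apply _
  · exact Submodule.inner_right_of_mem_orthogonal hv₀W (hWperpA _ (v _).2)
  · exact Submodule.inner_left_of_mem_orthogonal hAv₀W (v _).2
  · simpa using hvA _ _

end IsSkewSymmetric

end LinearMap

/-- Canonical form of an injective skew-adjoint operator `A` on a finite-dimensional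
real inner product space: `dim E = 2m` and there are vectors `v₁, …, v_m` and
positive reals `λ₁, …, λ_m` with `−A² vᵢ = λᵢ vᵢ` such that
`{v₁, A v₁/√λ₁, …, v_m, A v_m/√λ_m}` is an orthonormal basis of `E`. -/
theorem stmt15 {E : Type*} [NormedAddCommGroup E] [InnerProductSpace ℝ E]
    [FiniteDimensional ℝ E]
    (A : E →ₗ[ℝ] E) (hskew : ∀ v w : E, ⟪A v, w⟫ = -⟪v, A w⟫)
    (hinj : Function.Injective A) :
    ∃ m : ℕ, Module.finrank ℝ E = 2 * m ∧
      ∃ (v : Fin m → E) (lam : Fin m → ℝ),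
        (∀ i : Fin m, 0 < lam i) ∧
        (∀ i : Fin m, (-(A ∘ₗ A)) (v i) = lam i • v i) ∧
        ∃ b : OrthonormalBasis (Fin m ⊕ Fin m) ℝ E,
          (∀ i : Fin m, b (Sum.inl i) = v i) ∧
          (∀ i : Fin m, b (Sum.inr i) = (Real.sqrt (lam i))⁻¹ • A (v i)) := by
  have hA : A.IsSkewSymmetric := hskew
  obtain ⟨m, hm, v, lam, hlam, heig, hv, hvA⟩ := hA.exists_orthonormal_eigenvectors hinj
  have hb := hA.orthonormal_sum_elim hlam heig hv hvA
  have hcard : Fintype.card (Fin m ⊕ Fin m) = Module.finrank ℝ E := by simp [hm, two_mul]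
  refine ⟨m, hm, v, lam, hlam, heig,
    OrthonormalBasis.mk hb (hb.linearIndependent.span_eq_top_of_card_eq_finrank' hcard).ge,
    fun i ↦ by simp, fun i ↦ by simp⟩
end
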